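/- Let H ∈ F₂^{m×n} be the vertical stack of H_s and H_d, where the rows of H_d have pairwise disjoint supports, and suppose H is (δ,γ)-expanding. Then every x ∈ ker H_s is at the bottom of a linear energy well: for every Δx ∈ F₂ⁿ with |Δx| ≤ δn, the energy increase satisfies |H(x ⊕ Δx)| − |Hx| ≥ (γ − 2)·|Δx|. -/

import Mathlib

/-- A binary matrix `H` (rows indexed by a finite type `ι`) is
`(δ,γ)`-expanding if every `x ∈ F₂ⁿ` with Hamming weight `|x| ≤ δn`
satisfies `|Hx| ≥ γ|x|`. -/
def IsExpanding {ι : Type*} [Fintype ι] {n : ℕ}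
    (H : Matrix ι (Fin n) (ZMod 2)) (δ γ : ℝ) : Prop :=
  ∀ x : Fin n → ZMod 2, (hammingNorm x : ℝ) ≤ δ * n →
    γ * (hammingNorm x : ℝ) ≤ (hammingNorm (H.mulVec x) : ℝ)

/-!
Write `H = [H_s; H_d]`. Since `H_s x = 0`, the energy of `x` is `|H_d x|` and that of `x ⊕ Δx` is
`|H_s Δx| + |H_d x ⊕ H_d Δx| ≥ |H_s Δx| + |H_d x| - |H_d Δx|`. Hence the energy increase is at least
`|H Δx| - 2|H_d Δx| ≥ γ|Δx| - 2|H_d Δx|`, and `|H_d Δx| ≤ |Δx|` because rows with disjoint supports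
detect pairwise distinct nonzero coordinates of `Δx`.
-/

open Finset Function Matrix

theorem hammingNorm_sumElim {α β M : Type*} [Fintype α] [Fintype β] [Zero M] [DecidableEq M]
    (f : α → M) (g : β → M) :
    hammingNorm (Sum.elim f g) = hammingNorm f + hammingNorm g := by
  rw [hammingNorm, hammingNorm, hammingNorm, ← card_disjSum]
  congr 1
  ext (a | b) <;> simp

theorem hammingNorm_add_le {ι : Type*} [Fintype ι] {β : ι → Type*} [∀ i, AddZeroClass (β i)]
    [∀ i, DecidableEq (β i)] (x y : ∀ i, β i) :
    hammingNorm (x + y) ≤ hammingNorm x + hammingNorm y := by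
  classical
  refine (card_le_card fun i hi => ?_).trans (card_union_le _ _)
  simp only [mem_filter, mem_univ, true_and, mem_union, Pi.add_apply] at hi ⊢
  by_contra! h
  simp [h.1, h.2] at hi

theorem hammingNorm_le_hammingNorm_add_add {ι : Type*} [Fintype ι] {β : ι → Type*}
    [∀ i, AddGroup (β i)] [∀ i, DecidableEq (β i)] (x y : ∀ i, β i) :
    hammingNorm x ≤ hammingNorm (x + y) + hammingNorm y := by
  have hneg : hammingNorm (-y) = hammingNorm y :=
    hammingNorm_comp (fun _ => Neg.neg) (fun _ => neg_injective) fun _ => neg_zero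
  simpa [hneg] using hammingNorm_add_le (x + y) (-y)

theorem hammingNorm_fromRows_mulVec {m₁ m₂ n R : Type*} [Fintype m₁] [Fintype m₂] [Fintype n]
    [Semiring R] [DecidableEq R]
    (A₁ : Matrix m₁ n R) (A₂ : Matrix m₂ n R) (v : n → R) :
    hammingNorm (fromRows A₁ A₂ *ᵥ v) = hammingNorm (A₁ *ᵥ v) + hammingNorm (A₂ *ᵥ v) := by
  rw [fromRows_mulVec, hammingNorm_sumElim]

theorem hammingNorm_mulVec_le_of_pairwise_disjoint {m n R : Type*} [Fintype m] [Fintype n]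
    [NonUnitalNonAssocSemiring R] [NoZeroDivisors R] [DecidableEq R] (H : Matrix m n R)
    (hH : Pairwise (Disjoint on fun i => univ.filter fun j => H i j ≠ 0)) (v : n → R) :
    hammingNorm (H *ᵥ v) ≤ hammingNorm v := by
  classical
  set S : m → Finset n := fun i => univ.filter fun j => H i j ≠ 0 ∧ v j ≠ 0
  calc hammingNorm (H *ᵥ v) ≤ ∑ i, (S i).card := by
        rw [hammingNorm, card_filter]
        refine sum_le_sum fun i _ => ?_
        split_ifs with hi
        · obtain ⟨j, -, hj⟩ := exists_ne_zero_of_sum_ne_zero hi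
          exact card_pos.2 ⟨j, by simp [S, left_ne_zero_of_mul hj, right_ne_zero_of_mul hj]⟩
        · exact Nat.zero_le _
    _ = (univ.biUnion S).card := by
        refine (card_biUnion fun i _ k _ hik => ?_).symm
        exact (hH hik).mono (fun j => by simp +contextual [S]) (fun j => by simp +contextual [S])
    _ ≤ hammingNorm v := card_le_card fun j => by simp +contextual [S]

theorem kernel_states_linear_energy_well_general {m₁ m₂ n : ℕ}
    (Hs : Matrix (Fin m₁) (Fin n) (ZMod 2)) (Hd : Matrix (Fin m₂) (Fin n) (ZMod 2))
    (δ γ : ℝ)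
    (hdisj : ∀ i k : Fin m₂, i ≠ k →
      Disjoint (Finset.univ.filter (fun j : Fin n => Hd i j ≠ 0))
        (Finset.univ.filter (fun j : Fin n => Hd k j ≠ 0)))
    (hexp : IsExpanding (Matrix.fromRows Hs Hd) δ γ)
    (x : Fin n → ZMod 2) (hx : Hs.mulVec x = 0) :
    ∀ Δx : Fin n → ZMod 2, (hammingNorm Δx : ℝ) ≤ δ * n →
      (γ - 2) * (hammingNorm Δx : ℝ) ≤
        (hammingNorm ((Matrix.fromRows Hs Hd).mulVec (x + Δx)) : ℝ) -
          (hammingNorm ((Matrix.fromRows Hs Hd).mulVec x) : ℝ) := by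
  intro Δx hΔx
  have hexpΔ := hexp Δx hΔx
  rw [hammingNorm_fromRows_mulVec] at hexpΔ
  rw [hammingNorm_fromRows_mulVec, hammingNorm_fromRows_mulVec, mulVec_add, mulVec_add, hx,
    zero_add, hammingNorm_zero, zero_add]
  have htri : (hammingNorm (Hd *ᵥ x) : ℝ) ≤
      hammingNorm (Hd *ᵥ x + Hd *ᵥ Δx) + hammingNorm (Hd *ᵥ Δx) := by
    exact_mod_cast hammingNorm_le_hammingNorm_add_add _ _
  have hdiag : (hammingNorm (Hd *ᵥ Δx) : ℝ) ≤ hammingNorm Δx := by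
    exact_mod_cast hammingNorm_mulVec_le_of_pairwise_disjoint Hd (fun i k => hdisj i k) Δx
  push_cast at hexpΔ ⊢
  linarith

/-- let `H` be the vertical stack of `H_s` and `H_d`, where the
rows of `H_d` have pairwise disjoint supports, and suppose `H` is
`(δ,γ)`-expanding. Then every `x ∈ ker H_s` is at the bottom of a linear
energy well: for every `Δx` with `|Δx| ≤ δn`,
`|H(x ⊕ Δx)| − |Hx| ≥ (γ − 2)·|Δx|`. -/
theorem kernel_states_linear_energy_well {m₁ m₂ n : ℕ}
    (Hs : Matrix (Fin m₁) (Fin n) (ZMod 2)) (Hd : Matrix (Fin m₂) (Fin n) (ZMod 2))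
    (δ γ : ℝ) (hδ : 0 < δ) (hγ : 0 < γ)
    (hdisj : ∀ i k : Fin m₂, i ≠ k →
      Disjoint (Finset.univ.filter (fun j : Fin n => Hd i j ≠ 0))
        (Finset.univ.filter (fun j : Fin n => Hd k j ≠ 0)))
    (hexp : IsExpanding (Matrix.fromRows Hs Hd) δ γ)
    (x : Fin n → ZMod 2) (hx : Hs.mulVec x = 0) :
    ∀ Δx : Fin n → ZMod 2, (hammingNorm Δx : ℝ) ≤ δ * n →
      (γ - 2) * (hammingNorm Δx : ℝ) ≤
        (hammingNorm ((Matrix.fromRows Hs Hd).mulVec (x + Δx)) : ℝ) -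
          (hammingNorm ((Matrix.fromRows Hs Hd).mulVec x) : ℝ) :=
  kernel_states_linear_energy_well_general Hs Hd δ γ hdisj hexp x hx
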